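/- arXiv:1412.5383 — 4 statements merged into one kernel-verified Lean document; each statement's English description precedes it below -/
import Mathlib

section
/- Let τ₀ be a densely defined, accretive, continuous, closed bilinear form on L₂(m), and let j ≥ 0 be measurable on Ω×Ω. Then the perturbed form τ(u,v) = τ₀(u,v) + ∫∫ (u(x)−u(y))(v(x)−v(y)) j(x,y) dm² on D(τ) = {u ∈ D(τ₀) : ∫∫ (u(x)−u(y))² j dm² < ∞} is closed: if (uₙ) ⊆ D(τ) is Cauchy with respect to the form norm ‖·‖_τ and uₙ → u in L₂(m), then u ∈ D(τ) and ‖uₙ − u‖_τ → 0. -/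
open MeasureTheory Filter Topology Set
open scoped ENNReal

/-!
Restricted to `D(τ)`, the form norm splits into the `τ₀`-norm and the jump energy
`J f = ∫∫ (f x - f y)² j(x, y)`. The `τ₀`-part converges by closedness of `τ₀`. For the jump part,
pass to a subsequence `u_{n_k} → u` almost everywhere; Fatou's lemma for the nonnegative
integrands then gives `J (u_n - u) ≤ liminf_k J (u_n - u_{n_k})`, which is small by the Cauchy
property. Finiteness of `J u` follows from `u = u_N - (u_N - u)`.
-/

theorem cauchy_parts_of_cauchy_sqrt_add {a c : ℕ → ℕ → ℝ} {b : ℕ → ℕ → ℝ≥0∞}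
    (ha : ∀ m n, 0 ≤ a m n) (hc : ∀ m n, 0 ≤ c m n) (hb : ∀ m n, b m n ≠ ∞)
    (h : ∀ ε > 0, ∃ N : ℕ, ∀ m ≥ N, ∀ n ≥ N, √(a m n + (b m n).toReal + c m n) < ε) :
    (∀ ε > 0, ∃ N : ℕ, ∀ m ≥ N, ∀ n ≥ N, √(a m n + c m n) < ε) ∧
      ∀ ε > 0, ∃ N : ℕ, ∀ m ≥ N, ∀ n ≥ N, b m n ≤ ε := by
  constructor
  · intro ε hε
    obtain ⟨N, hN⟩ := h ε hε
    refine ⟨N, fun m hm n hn => (Real.sqrt_le_sqrt ?_).trans_lt (hN m hm n hn)⟩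
    linarith [(b m n).toReal_nonneg]
  · intro ε hε
    obtain ⟨r, -, hr₀, hrε⟩ := ENNReal.lt_iff_exists_real_btwn.1 hε
    have hr : 0 < r := ENNReal.ofReal_pos.1 hr₀
    obtain ⟨N, hN⟩ := h (√r) (Real.sqrt_pos.2 hr)
    refine ⟨N, fun m hm n hn => le_trans ?_ hrε.le⟩
    have hsum := (Real.sqrt_lt_sqrt_iff_of_pos hr).1 (hN m hm n hn)
    rw [ENNReal.le_ofReal_iff_toReal_le (hb m n) hr.le]
    linarith [ha m n, hc m n]

theorem tendsto_sqrt_add_of_tendsto {a c : ℕ → ℝ} {b : ℕ → ℝ≥0∞}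
    (ha : ∀ n, 0 ≤ a n) (hc : ∀ n, 0 ≤ c n)
    (hac : Tendsto (fun n => √(a n + c n)) atTop (𝓝 0)) (hb : Tendsto b atTop (𝓝 0)) :
    Tendsto (fun n => √(a n + (b n).toReal + c n)) atTop (𝓝 0) := by
  have hac' : Tendsto (fun n => a n + c n) atTop (𝓝 0) := by
    simpa [Real.sq_sqrt (add_nonneg (ha _) (hc _))] using hac.pow 2
  have hb' : Tendsto (fun n => (b n).toReal) atTop (𝓝 0) :=
    (ENNReal.tendsto_toReal ENNReal.zero_ne_top).comp hb
  simpa [add_right_comm] using (hac'.add hb').sqrt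

section JumpEnergy

variable {Ω : Type*} [MeasurableSpace Ω] {μ : Measure Ω} {j : Ω × Ω → ℝ}

theorem exists_subseq_tendsto_ae_of_integral_sq {f : ℕ → Ω → ℝ} {g : Ω → ℝ}
    (hf : ∀ n, MemLp (f n) 2 μ) (hg : MemLp g 2 μ)
    (hfg : Tendsto (fun n => ∫ x, (f n x - g x) ^ 2 ∂μ) atTop (𝓝 0)) :
    ∃ ns : ℕ → ℕ, StrictMono ns ∧ ∀ᵐ x ∂μ, Tendsto (fun k => f (ns k) x) atTop (𝓝 (g x)) := by
  have hnorm : Tendsto (fun n => eLpNorm (f n - g) 2 μ) atTop (𝓝 0) := by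
    have h := ENNReal.tendsto_ofReal (hfg.rpow_const (p := 2⁻¹) (Or.inr (by norm_num)))
    simp only [Real.zero_rpow (by norm_num : (2 : ℝ)⁻¹ ≠ 0), ENNReal.ofReal_zero] at h
    refine h.congr fun n => ?_
    rw [((hf n).sub hg).eLpNorm_eq_integral_rpow_norm two_ne_zero ENNReal.ofNat_ne_top]
    simp [Real.norm_eq_abs, sq_abs]
  exact (tendstoInMeasure_of_tendsto_eLpNorm two_ne_zero (fun n => (hf n).aestronglyMeasurable)
    hg.aestronglyMeasurable hnorm).exists_seq_tendsto_ae

noncomputable def jumpEnergy (μ : Measure Ω) (j : Ω × Ω → ℝ) (f : Ω → ℝ) : ℝ≥0∞ :=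
  ∫⁻ z, ENNReal.ofReal ((f z.1 - f z.2) ^ 2 * j z) ∂μ.prod μ

theorem aemeasurable_jump_integrand (hj : Measurable j) {f : Ω → ℝ} (hf : AEMeasurable f μ) :
    AEMeasurable (fun z : Ω × Ω => ENNReal.ofReal ((f z.1 - f z.2) ^ 2 * j z)) (μ.prod μ) :=
  (((hf.comp_quasiMeasurePreserving Measure.quasiMeasurePreserving_fst).sub
    (hf.comp_quasiMeasurePreserving Measure.quasiMeasurePreserving_snd)).pow_const 2).mul
    hj.aemeasurable |>.ennreal_ofReal

theorem jumpEnergy_sub_le (hj : Measurable j) (hj0 : ∀ z, 0 ≤ j z) (f : Ω → ℝ) {g : Ω → ℝ}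
    (hg : AEMeasurable g μ) :
    jumpEnergy μ j (f - g) ≤ 2 * jumpEnergy μ j f + 2 * jumpEnergy μ j g := by
  have hpt : ∀ z : Ω × Ω, ENNReal.ofReal (((f - g) z.1 - (f - g) z.2) ^ 2 * j z) ≤
      2 * ENNReal.ofReal ((f z.1 - f z.2) ^ 2 * j z) +
        2 * ENNReal.ofReal ((g z.1 - g z.2) ^ 2 * j z) := by
    intro z
    set a := f z.1 - f z.2
    set b := g z.1 - g z.2
    have hab : ((f - g) z.1 - (f - g) z.2) ^ 2 ≤ 2 * a ^ 2 + 2 * b ^ 2 := by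
      simp only [Pi.sub_apply]
      nlinarith [sq_nonneg (a + b)]
    calc _ ≤ ENNReal.ofReal (2 * (a ^ 2 * j z) + 2 * (b ^ 2 * j z)) :=
          ENNReal.ofReal_le_ofReal (by nlinarith [hj0 z])
      _ = _ := by
          rw [ENNReal.ofReal_add (mul_nonneg zero_le_two (mul_nonneg (sq_nonneg a) (hj0 z)))
              (mul_nonneg zero_le_two (mul_nonneg (sq_nonneg b) (hj0 z))),
            ENNReal.ofReal_mul zero_le_two, ENNReal.ofReal_mul zero_le_two, ENNReal.ofReal_ofNat]
  calc jumpEnergy μ j (f - g) ≤ _ := lintegral_mono hpt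
    _ = _ := by
      rw [lintegral_add_right' _ ((aemeasurable_jump_integrand hj hg).const_mul 2),
        lintegral_const_mul' _ _ ENNReal.ofNat_ne_top,
        lintegral_const_mul' _ _ ENNReal.ofNat_ne_top]
      rfl

theorem jumpEnergy_sub_ne_top (hj : Measurable j) (hj0 : ∀ z, 0 ≤ j z) {f g : Ω → ℝ}
    (hg : AEMeasurable g μ) (hf : jumpEnergy μ j f ≠ ∞) (hg' : jumpEnergy μ j g ≠ ∞) :
    jumpEnergy μ j (f - g) ≠ ∞ :=
  ne_top_of_le_ne_top (by finiteness) (jumpEnergy_sub_le hj hj0 f hg)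

theorem jumpEnergy_le_liminf (hj : Measurable j) {f : ℕ → Ω → ℝ} {g : Ω → ℝ}
    (hf : ∀ k, AEMeasurable (f k) μ)
    (hfg : ∀ᵐ x ∂μ, Tendsto (fun k => f k x) atTop (𝓝 (g x))) :
    jumpEnergy μ j g ≤ liminf (fun k => jumpEnergy μ j (f k)) atTop :=
  calc jumpEnergy μ j g
      = ∫⁻ z, liminf (fun k => ENNReal.ofReal ((f k z.1 - f k z.2) ^ 2 * j z)) atTop
          ∂μ.prod μ := by
        refine lintegral_congr_ae ?_
        filter_upwards [Measure.quasiMeasurePreserving_fst.ae hfg,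
          Measure.quasiMeasurePreserving_snd.ae hfg] with z h₁ h₂
        exact ((ENNReal.continuous_ofReal.tendsto _).comp
          (((h₁.sub h₂).pow 2).mul_const _)).liminf_eq.symm
    _ ≤ _ := lintegral_liminf_le' fun k => aemeasurable_jump_integrand hj (hf k)

theorem tendsto_jumpEnergy_sub_of_cauchy (hj : Measurable j) {f : ℕ → Ω → ℝ} {g : Ω → ℝ}
    (hf : ∀ n, AEMeasurable (f n) μ)
    (hcau : ∀ ε > 0, ∃ N : ℕ, ∀ m ≥ N, ∀ n ≥ N, jumpEnergy μ j (f m - f n) ≤ ε)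
    {ns : ℕ → ℕ} (hns : Tendsto ns atTop atTop)
    (hfg : ∀ᵐ x ∂μ, Tendsto (fun k => f (ns k) x) atTop (𝓝 (g x))) :
    Tendsto (fun n => jumpEnergy μ j (f n - g)) atTop (𝓝 0) := by
  refine ENNReal.tendsto_atTop_zero.2 fun ε hε => ?_
  obtain ⟨N, hN⟩ := hcau ε hε
  refine ⟨N, fun n hn => ?_⟩
  calc jumpEnergy μ j (f n - g) ≤ liminf (fun k => jumpEnergy μ j (f n - f (ns k))) atTop :=
        jumpEnergy_le_liminf hj (fun k => (hf n).sub (hf (ns k)))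
          (hfg.mono fun x hx => tendsto_const_nhds.sub hx)
    _ ≤ ε := liminf_le_of_frequently_le'
        ((hns.eventually_ge_atTop N).mono fun k hk => hN n hn _ hk).frequently

end JumpEnergy

/-- Closedness of the perturbed form `τ = τ₀ + τ_j`. -/
theorem perturbed_form_closed
    {Ω : Type*} [MeasurableSpace Ω] (μ : Measure Ω)
    (D₀ : Set (Ω → ℝ)) (τ₀ : (Ω → ℝ) → (Ω → ℝ) → ℝ)
    (hD₀L2 : ∀ u ∈ D₀, MemLp u 2 μ)
    (haccr : ∀ u ∈ D₀, 0 ≤ τ₀ u u)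
    (hsub : ∀ u ∈ D₀, ∀ v ∈ D₀, u - v ∈ D₀)
    -- closedness of `τ₀`: `(D(τ₀), ‖·‖_{τ₀})` is complete
    (hclosed : ∀ (v : ℕ → Ω → ℝ) (w : Ω → ℝ), (∀ n, v n ∈ D₀) →
      (∀ ε > 0, ∃ N : ℕ, ∀ m ≥ N, ∀ n ≥ N,
        Real.sqrt (τ₀ (v m - v n) (v m - v n) + ∫ x, (v m x - v n x) ^ 2 ∂μ) < ε) →
      MemLp w 2 μ →
      Tendsto (fun n => ∫ x, (v n x - w x) ^ 2 ∂μ) atTop (nhds 0) →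
      w ∈ D₀ ∧
        Tendsto (fun n =>
          Real.sqrt (τ₀ (v n - w) (v n - w) + ∫ x, (v n x - w x) ^ 2 ∂μ))
          atTop (nhds 0))
    (j : Ω × Ω → ℝ) (hjm : Measurable j) (hj0 : ∀ z, 0 ≤ j z)
    -- a sequence in `D(τ)`, `‖·‖_τ`-Cauchy, converging to `u` in `L₂(m)`
    (un : ℕ → Ω → ℝ) (u : Ω → ℝ)
    (hmem : ∀ n, un n ∈ D₀)
    (hfin : ∀ n, (∫⁻ z : Ω × Ω,
      ENNReal.ofReal ((un n z.1 - un n z.2) ^ 2 * j z) ∂(μ.prod μ)) < ⊤)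
    (hcauchy : ∀ ε > 0, ∃ N : ℕ, ∀ m ≥ N, ∀ n ≥ N,
      Real.sqrt (τ₀ (un m - un n) (un m - un n) +
        (∫⁻ z : Ω × Ω,
          ENNReal.ofReal ((un m z.1 - un n z.1 - (un m z.2 - un n z.2)) ^ 2 * j z)
          ∂(μ.prod μ)).toReal +
        ∫ x, (un m x - un n x) ^ 2 ∂μ) < ε)
    (huL2 : MemLp u 2 μ)
    (hconv : Tendsto (fun n => ∫ x, (un n x - u x) ^ 2 ∂μ) atTop (nhds 0)) :
    u ∈ D₀ ∧
      (∫⁻ z : Ω × Ω,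
        ENNReal.ofReal ((u z.1 - u z.2) ^ 2 * j z) ∂(μ.prod μ)) < ⊤ ∧
      Tendsto (fun n =>
        Real.sqrt (τ₀ (un n - u) (un n - u) +
          (∫⁻ z : Ω × Ω,
            ENNReal.ofReal ((un n z.1 - u z.1 - (un n z.2 - u z.2)) ^ 2 * j z)
            ∂(μ.prod μ)).toReal +
          ∫ x, (un n x - u x) ^ 2 ∂μ)) atTop (nhds 0) := by
  have hL2 : ∀ n, MemLp (un n) 2 μ := fun n => hD₀L2 _ (hmem n)
  have hmeas : ∀ n, AEMeasurable (un n) μ := fun n => (hL2 n).aestronglyMeasurable.aemeasurable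
  obtain ⟨hcau₀, hcauJ⟩ := cauchy_parts_of_cauchy_sqrt_add
    (b := fun m n => jumpEnergy μ j (un m - un n))
    (fun m n => haccr _ (hsub _ (hmem m) _ (hmem n)))
    (fun m n => integral_nonneg fun x => sq_nonneg _)
    (fun m n => jumpEnergy_sub_ne_top hjm hj0 (hmeas n) (hfin m).ne (hfin n).ne) hcauchy
  obtain ⟨huD₀, hτ₀⟩ := hclosed un u hmem hcau₀ huL2 hconv
  obtain ⟨ns, hns, hae⟩ := exists_subseq_tendsto_ae_of_integral_sq hL2 huL2 hconv
  have hJ : Tendsto (fun n => jumpEnergy μ j (un n - u)) atTop (𝓝 0) :=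
    tendsto_jumpEnergy_sub_of_cauchy hjm hmeas hcauJ hns.tendsto_atTop hae
  obtain ⟨N, hN⟩ := (hJ.eventually (eventually_ne_nhds ENNReal.zero_ne_top)).exists
  have hJu : jumpEnergy μ j (un N - (un N - u)) ≠ ∞ :=
    jumpEnergy_sub_ne_top hjm hj0 ((hmeas N).sub huL2.aestronglyMeasurable.aemeasurable)
      (hfin N).ne hN
  rw [sub_sub_cancel] at hJu
  exact ⟨huD₀, hJu.lt_top, tendsto_sqrt_add_of_tendsto
    (fun n => haccr _ (hsub _ (hmem n) _ huD₀)) (fun n => integral_nonneg fun x => sq_nonneg _)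
    hτ₀ hJ⟩
end

section
/- Let τ₀ be a densely defined accretive continuous closed form on L₂(m) whose associated semigroup S is positive (equivalently, u ∈ D(τ₀) implies u⁺ ∈ D(τ₀) and τ₀(u⁺,u⁻) ≤ 0). Let j ≥ 0 be measurable and τ = τ₀ + τ_j the perturbed form. Then τ satisfies the positivity criterion: for u ∈ D(τ), u⁺ ∈ D(τ) and τ(u⁺, u⁻) ≤ 0; hence the semigroup T associated to τ is positive. -/
open MeasureTheory Set
open scoped ENNReal

section PositivePart

variable {α : Type*} [Ring α] [LinearOrder α] [IsStrictOrderedRing α]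

theorem sq_max_zero_sub_max_zero_le (a b : α) : (max a 0 - max b 0) ^ 2 ≤ (a - b) ^ 2 :=
  sq_le_sq.2 (abs_max_sub_max_le_abs a b 0)

/-- `x ↦ x⁺` is monotone and `x ↦ x⁻` antitone, so the two increments have opposite signs. -/
theorem max_zero_sub_mul_max_neg_zero_sub_nonpos (a b : α) :
    (max a 0 - max b 0) * (max (-a) 0 - max (-b) 0) ≤ 0 := by
  rcases le_total a b with h | h
  · exact mul_nonpos_of_nonpos_of_nonneg (sub_nonpos.2 (max_le_max_right 0 h))
      (sub_nonneg.2 (max_le_max_right 0 (neg_le_neg h)))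
  · exact mul_nonpos_of_nonneg_of_nonpos (sub_nonneg.2 (max_le_max_right 0 h))
      (sub_nonpos.2 (max_le_max_right 0 (neg_le_neg h)))

end PositivePart

theorem perturbed_form_positivity_criterion_general
    {Ω : Type*} [MeasurableSpace Ω] (μ : Measure Ω)
    (D₀ : Set (Ω → ℝ)) (τ₀ : (Ω → ℝ) → (Ω → ℝ) → ℝ)
    (hpos : ∀ u ∈ D₀, (fun x => max (u x) 0) ∈ D₀ ∧
      τ₀ (fun x => max (u x) 0) (fun x => max (-u x) 0) ≤ 0)
    (j : Ω × Ω → ℝ) (hj0 : ∀ z, 0 ≤ j z) :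
    ∀ u : Ω → ℝ, u ∈ D₀ →
      (∫⁻ z : Ω × Ω,
        ENNReal.ofReal ((u z.1 - u z.2) ^ 2 * j z) ∂(μ.prod μ)) < ⊤ →
      ((fun x => max (u x) 0) ∈ D₀ ∧
        (∫⁻ z : Ω × Ω,
          ENNReal.ofReal ((max (u z.1) 0 - max (u z.2) 0) ^ 2 * j z)
          ∂(μ.prod μ)) < ⊤ ∧
        τ₀ (fun x => max (u x) 0) (fun x => max (-u x) 0) +
          (∫ z : Ω × Ω,
            (max (u z.1) 0 - max (u z.2) 0) * (max (-u z.1) 0 - max (-u z.2) 0) * j z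
            ∂(μ.prod μ)) ≤ 0) := by
  intro u hu hfin
  obtain ⟨hmem, hτ₀⟩ := hpos u hu
  have hτj : ∫ z : Ω × Ω,
      (max (u z.1) 0 - max (u z.2) 0) * (max (-u z.1) 0 - max (-u z.2) 0) * j z
      ∂(μ.prod μ) ≤ 0 :=
    integral_nonpos fun z =>
      mul_nonpos_of_nonpos_of_nonneg (max_zero_sub_mul_max_neg_zero_sub_nonpos _ _) (hj0 z)
  refine ⟨hmem, hfin.trans_le' (lintegral_mono fun z => ?_), add_nonpos hτ₀ hτj⟩
  exact ENNReal.ofReal_le_ofReal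
    (mul_le_mul_of_nonneg_right (sq_max_zero_sub_max_zero_le _ _) (hj0 z))

/-- If `τ₀` satisfies the Ouhabaz positivity criterion (`u ∈ D(τ₀)` implies
`u⁺ ∈ D(τ₀)` and `τ₀(u⁺,u⁻) ≤ 0`), then so does the perturbed form `τ = τ₀ + τ_j`:
for `u ∈ D(τ)`, `u⁺ ∈ D(τ)` and `τ(u⁺,u⁻) ≤ 0`. -/
theorem perturbed_form_positivity_criterion
    {Ω : Type*} [MeasurableSpace Ω] (μ : Measure Ω)
    (D₀ : Set (Ω → ℝ)) (τ₀ : (Ω → ℝ) → (Ω → ℝ) → ℝ)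
    (hD₀L2 : ∀ u ∈ D₀, MemLp u 2 μ)
    (hpos : ∀ u ∈ D₀, (fun x => max (u x) 0) ∈ D₀ ∧
      τ₀ (fun x => max (u x) 0) (fun x => max (-u x) 0) ≤ 0)
    (j : Ω × Ω → ℝ) (hjm : Measurable j) (hj0 : ∀ z, 0 ≤ j z) :
    ∀ u : Ω → ℝ, u ∈ D₀ →
      (∫⁻ z : Ω × Ω,
        ENNReal.ofReal ((u z.1 - u z.2) ^ 2 * j z) ∂(μ.prod μ)) < ⊤ →
      ((fun x => max (u x) 0) ∈ D₀ ∧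
        (∫⁻ z : Ω × Ω,
          ENNReal.ofReal ((max (u z.1) 0 - max (u z.2) 0) ^ 2 * j z)
          ∂(μ.prod μ)) < ⊤ ∧
        τ₀ (fun x => max (u x) 0) (fun x => max (-u x) 0) +
          (∫ z : Ω × Ω,
            (max (u z.1) 0 - max (u z.2) 0) * (max (-u z.1) 0 - max (-u z.2) 0) * j z
            ∂(μ.prod μ)) ≤ 0) :=
  perturbed_form_positivity_criterion_general μ D₀ τ₀ hpos j hj0
end

section
/- Let τ₀ be a densely defined accretive continuous closed form on L₂(m) whose associated semigroup S is positive and L_∞-contractive (equivalently, u ∈ D(τ₀) implies u∧1 ∈ D(τ₀) and τ₀(u∧1, (u−1)⁺) ≥ 0). Let j ≥ 0 be measurable and τ = τ₀ + τ_j. Then for u ∈ D(τ), u∧1 ∈ D(τ) and τ(u∧1, (u−1)⁺) ≥ 0; hence the semigroup T associated to τ is positive and L_∞-contractive. -/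
open MeasureTheory
open scoped ENNReal

/-! Truncation `u ↦ u ∧ c` is a contraction, and `u ∧ c`, `(u - c)⁺` are both nondecreasing in `u`,
so pointwise the jump part of the form can only decrease under truncation and
`(u ∧ 1)(x) - (u ∧ 1)(y)` and `(u - 1)⁺(x) - (u - 1)⁺(y)` have the same sign. Integrating
these inequalities against `j ≥ 0` transfers the Ouhabaz criterion from `τ₀` to `τ₀ + τ_j`. -/

section Truncation

variable {α : Type*} [LinearOrder α] [Ring α] [IsStrictOrderedRing α]

lemma sq_min_sub_min_le (a b c : α) : (min a c - min b c) ^ 2 ≤ (a - b) ^ 2 :=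
  sq_le_sq.mpr (by simpa using abs_min_sub_min_le_max a c b c)

lemma min_sub_min_mul_max_sub_sub_max_sub_nonneg (a b c : α) :
    0 ≤ (min a c - min b c) * (max (a - c) 0 - max (b - c) 0) := by
  have hsub : Monotone fun x : α => x - c := fun _ _ h => sub_le_sub_right h c
  exact (Monotone.monovary (f := fun x : α => min x c) (g := fun x => max (x - c) 0)
    (monotone_id.min monotone_const) (hsub.max monotone_const)).sub_mul_sub_nonneg b a

end Truncation

section JumpForm

variable {X : Type*} [MeasurableSpace X] (ν : Measure (X × X)) (u : X → ℝ) (c : ℝ)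
  {j : X × X → ℝ}

lemma lintegral_jump_min_le (hj : ∀ z, 0 ≤ j z) :
    ∫⁻ z, ENNReal.ofReal ((min (u z.1) c - min (u z.2) c) ^ 2 * j z) ∂ν ≤
      ∫⁻ z, ENNReal.ofReal ((u z.1 - u z.2) ^ 2 * j z) ∂ν :=
  lintegral_mono fun z =>
    ENNReal.ofReal_le_ofReal (mul_le_mul_of_nonneg_right (sq_min_sub_min_le _ _ _) (hj z))

lemma integral_jump_min_max_sub_nonneg (hj : ∀ z, 0 ≤ j z) :
    0 ≤ ∫ z, (min (u z.1) c - min (u z.2) c) *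
      (max (u z.1 - c) 0 - max (u z.2 - c) 0) * j z ∂ν :=
  integral_nonneg fun z => mul_nonneg (min_sub_min_mul_max_sub_sub_max_sub_nonneg _ _ _) (hj z)

end JumpForm

theorem perturbed_form_Linfty_contractivity_criterion_general
    {Ω : Type*} [MeasurableSpace Ω] (μ : Measure Ω)
    (D₀ : Set (Ω → ℝ)) (τ₀ : (Ω → ℝ) → (Ω → ℝ) → ℝ)
    (hcontr : ∀ u ∈ D₀, (fun x => min (u x) 1) ∈ D₀ ∧
      0 ≤ τ₀ (fun x => min (u x) 1) (fun x => max (u x - 1) 0))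
    (j : Ω × Ω → ℝ) (hj0 : ∀ z, 0 ≤ j z) :
    ∀ u : Ω → ℝ, u ∈ D₀ →
      (∫⁻ z : Ω × Ω,
        ENNReal.ofReal ((u z.1 - u z.2) ^ 2 * j z) ∂(μ.prod μ)) < ⊤ →
      ((fun x => min (u x) 1) ∈ D₀ ∧
        (∫⁻ z : Ω × Ω,
          ENNReal.ofReal ((min (u z.1) 1 - min (u z.2) 1) ^ 2 * j z)
          ∂(μ.prod μ)) < ⊤ ∧
        0 ≤ τ₀ (fun x => min (u x) 1) (fun x => max (u x - 1) 0) +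
          ∫ z : Ω × Ω,
            (min (u z.1) 1 - min (u z.2) 1) * (max (u z.1 - 1) 0 - max (u z.2 - 1) 0) * j z
            ∂(μ.prod μ)) := by
  intro u hu hfin
  obtain ⟨hmem, hτ₀⟩ := hcontr u hu
  exact ⟨hmem, (lintegral_jump_min_le _ u 1 hj0).trans_lt hfin,
    add_nonneg hτ₀ (integral_jump_min_max_sub_nonneg _ u 1 hj0)⟩

/-- If `τ₀` satisfies the Ouhabaz criterion for positivity and `L_∞`-contractivity
(`u ∈ D(τ₀)` implies `u∧1 ∈ D(τ₀)` and `τ₀(u∧1,(u−1)⁺) ≥ 0`), then so does the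
perturbed form `τ = τ₀ + τ_j`. -/
theorem perturbed_form_Linfty_contractivity_criterion
    {Ω : Type*} [MeasurableSpace Ω] (μ : Measure Ω)
    (D₀ : Set (Ω → ℝ)) (τ₀ : (Ω → ℝ) → (Ω → ℝ) → ℝ)
    (hD₀L2 : ∀ u ∈ D₀, MemLp u 2 μ)
    (hcontr : ∀ u ∈ D₀, (fun x => min (u x) 1) ∈ D₀ ∧
      0 ≤ τ₀ (fun x => min (u x) 1) (fun x => max (u x - 1) 0))
    (j : Ω × Ω → ℝ) (hjm : Measurable j) (hj0 : ∀ z, 0 ≤ j z) :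
    ∀ u : Ω → ℝ, u ∈ D₀ →
      (∫⁻ z : Ω × Ω,
        ENNReal.ofReal ((u z.1 - u z.2) ^ 2 * j z) ∂(μ.prod μ)) < ⊤ →
      ((fun x => min (u x) 1) ∈ D₀ ∧
        (∫⁻ z : Ω × Ω,
          ENNReal.ofReal ((min (u z.1) 1 - min (u z.2) 1) ^ 2 * j z)
          ∂(μ.prod μ)) < ⊤ ∧
        0 ≤ τ₀ (fun x => min (u x) 1) (fun x => max (u x - 1) 0) +
          ∫ z : Ω × Ω,
            (min (u z.1) 1 - min (u z.2) 1) * (max (u z.1 - 1) 0 - max (u z.2 - 1) 0) * j z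
            ∂(μ.prod μ)) :=
  perturbed_form_Linfty_contractivity_criterion_general μ D₀ τ₀ hcontr j hj0
end

section
/- Let A_S, A_T be generators of C₀-semigroups on L₂(m). Suppose for some C ≥ 0, fixed 0 ≤ f ∈ L_p(m), 0 ≤ g' ∈ L_{q'}(m), and all sufficiently large λ ∈ ℝ, the resolvent estimate ⟨(λ−A_T)⁻¹u, v'⟩ ≤ ⟨(λ−A_S)⁻¹u, v'⟩ + C⟨(λ−A_T)⁻¹u, g'⟩⟨f, (λ−A_S')⁻¹v'⟩ holds for all 0 ≤ u ∈ L₂∩L_q(m), 0 ≤ v' ∈ L₂∩L_{p'}(m), with both resolvents positivity preserving. Then by induction, for all n ∈ ℕ: ⟨(λ−A_T)⁻ⁿu, v'⟩ ≤ ⟨(λ−A_S)⁻ⁿu, v'⟩ + C ∑_{l=1}^{n} ⟨(λ−A_T)^{l−n−1}u, g'⟩⟨f, (λ−A_S')⁻ˡ v'⟩. -/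
open MeasureTheory
open scoped ENNReal

/-!
Write `⟨·,·⟩` for the pairing and `R_T`, `R_S`, `R_S'` for the resolvents. Applying the case
`n` to `R_T u` gives `⟨R_T^{n+1} u, v⟩ ≤ ⟨R_T u, R_S'^n v⟩ + C ∑ …`. Applying the case `n = 1`
to the pair `(u, R_S'^n v)`, which is admissible because `R_S'` preserves nonnegativity and
`L_{p'}`, bounds `⟨R_T u, R_S'^n v⟩` by `⟨R_S^{n+1} u, v⟩` plus the `l = n + 1` term of the
new sum. Only the pairing, the duality `⟨R_S u, v⟩ = ⟨u, R_S' v⟩` and the invariant classes of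
admissible `u` and `v` enter the argument.
-/

section AbstractPairing

variable {E : Type*} (pair : E → E → ℝ) {S S' : E → E}

theorem pair_iterate_eq_pair_iterate (hdual : ∀ u v, pair (S u) v = pair u (S' v)) :
    ∀ n u v, pair (S^[n] u) v = pair u (S'^[n] v)
  | 0, _, _ => rfl
  | n + 1, u, v => by
    rw [Function.iterate_succ_apply, pair_iterate_eq_pair_iterate hdual n,
      hdual, ← Function.iterate_succ_apply' S']

theorem pair_iterate_le_add_sum {T : E → E} (a b : E → ℝ) (C : ℝ) {P Q : E → Prop}
    (hTP : ∀ u, P u → P (T u)) (hS'Q : ∀ v, Q v → Q (S' v))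
    (hdual : ∀ u v, pair (S u) v = pair u (S' v))
    (hbase : ∀ u v, P u → Q v → pair (T u) v ≤ pair (S u) v + C * a (T u) * b (S' v))
    (n : ℕ) (hn : 1 ≤ n) :
    ∀ u v, P u → Q v → pair (T^[n] u) v ≤
      pair (S^[n] u) v + C * ∑ l ∈ Finset.Icc 1 n, a (T^[n + 1 - l] u) * b (S'^[l] v) := by
  induction n, hn using Nat.le_induction with
  | base =>
    intro u v hu hv
    simpa [mul_assoc] using hbase u v hu hv
  | succ n hn ih =>
    intro u v hu hv
    have hQ : Q (S'^[n] v) := Function.Iterate.rec Q hv hS'Q n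
    have hshift : ∀ l ∈ Finset.Icc 1 n, a (T^[n + 1 - l] (T u)) * b (S'^[l] v) =
        a (T^[n + 1 + 1 - l] u) * b (S'^[l] v) := by
      intro l hl
      rw [show n + 1 + 1 - l = n + 1 - l + 1 by grind, Function.iterate_succ_apply]
    calc pair (T^[n + 1] u) v
        = pair (T^[n] (T u)) v := by rw [Function.iterate_succ_apply]
      _ ≤ pair (T u) (S'^[n] v) +
            C * ∑ l ∈ Finset.Icc 1 n, a (T^[n + 1 - l] (T u)) * b (S'^[l] v) := by
          rw [← pair_iterate_eq_pair_iterate pair hdual]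
          exact ih (T u) v (hTP u hu) hv
      _ ≤ pair (S u) (S'^[n] v) + C * a (T u) * b (S' (S'^[n] v)) +
            C * ∑ l ∈ Finset.Icc 1 n, a (T^[n + 1 - l] (T u)) * b (S'^[l] v) := by
          gcongr
          exact hbase u _ hu hQ
      _ = pair (S^[n + 1] u) v +
            C * ∑ l ∈ Finset.Icc 1 (n + 1), a (T^[n + 1 + 1 - l] u) * b (S'^[l] v) := by
          rw [Finset.sum_Icc_succ_top (by omega), ← Finset.sum_congr rfl hshift,
            Function.iterate_succ_apply, pair_iterate_eq_pair_iterate pair hdual,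
            ← Function.iterate_succ_apply' S', Nat.add_sub_cancel_left, Function.iterate_one]
          ring

end AbstractPairing

theorem resolvent_power_estimate_general
    {Ω : Type*} [MeasurableSpace Ω] (μ : Measure Ω)
    (q p' : ℝ≥0∞)
    (RT RS RS' : ℝ → (Lp ℝ 2 μ →L[ℝ] Lp ℝ 2 μ)) (lam₀ : ℝ)
    -- positivity of the resolvents
    (hRTpos : ∀ lam ≥ lam₀, ∀ u : Lp ℝ 2 μ, 0 ≤ u → 0 ≤ RT lam u)
    (hRS'pos : ∀ lam ≥ lam₀, ∀ v : Lp ℝ 2 μ, 0 ≤ v → 0 ≤ RS' lam v)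
    -- `T` acts on `L_q(m)`: its resolvent preserves `L₂ ∩ L_q(m)`
    (hRTq : ∀ lam ≥ lam₀, ∀ u : Lp ℝ 2 μ, MemLp (↑u) q μ → MemLp (↑(RT lam u)) q μ)
    -- `S` acts on `L_p(m)`: the dual resolvent preserves `L₂ ∩ L_{p'}(m)`
    (hRS'p' : ∀ lam ≥ lam₀, ∀ v : Lp ℝ 2 μ, MemLp (↑v) p' μ → MemLp (↑(RS' lam v)) p' μ)
    -- `RS'` is the dual of `RS`
    (hdual : ∀ lam ≥ lam₀, ∀ u v : Lp ℝ 2 μ,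
      ∫ x, (RS lam u) x * v x ∂μ = ∫ x, u x * (RS' lam v) x ∂μ)
    (f g' : Ω → ℝ)
    (C : ℝ)
    -- the resolvent estimate for `n = 1`
    (hbase : ∀ lam ≥ lam₀, ∀ u v' : Lp ℝ 2 μ,
      0 ≤ u → MemLp (↑u) q μ → 0 ≤ v' → MemLp (↑v') p' μ →
      ∫ x, (RT lam u) x * v' x ∂μ ≤ (∫ x, (RS lam u) x * v' x ∂μ) +
        C * (∫ x, (RT lam u) x * g' x ∂μ) * (∫ x, f x * (RS' lam v') x ∂μ)) :
    -- the estimate for all powers `n`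
    ∀ lam ≥ lam₀, ∀ n : ℕ, 1 ≤ n → ∀ u v' : Lp ℝ 2 μ,
      0 ≤ u → MemLp (↑u) q μ → 0 ≤ v' → MemLp (↑v') p' μ →
      ∫ x, ((RT lam ^ n) u) x * v' x ∂μ ≤ (∫ x, ((RS lam ^ n) u) x * v' x ∂μ) +
        C * ∑ l ∈ Finset.Icc 1 n,
          (∫ x, ((RT lam ^ (n + 1 - l)) u) x * g' x ∂μ) *
            (∫ x, f x * ((RS' lam ^ l) v') x ∂μ) := by
  intro lam hlam n hn u v' hu huq hv' hv'p'
  simp only [FunLike.coe_pow_eq_iterate]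
  exact pair_iterate_le_add_sum (fun u v : Lp ℝ 2 μ ↦ ∫ x, u x * v x ∂μ)
    (fun w ↦ ∫ x, w x * g' x ∂μ) (fun w ↦ ∫ x, f x * w x ∂μ) C
    (P := fun u ↦ 0 ≤ u ∧ MemLp (↑u) q μ) (Q := fun v ↦ 0 ≤ v ∧ MemLp (↑v) p' μ)
    (fun u hu ↦ ⟨hRTpos lam hlam u hu.1, hRTq lam hlam u hu.2⟩)
    (fun v hv ↦ ⟨hRS'pos lam hlam v hv.1, hRS'p' lam hlam v hv.2⟩)
    (hdual lam hlam) (fun u v hu hv ↦ hbase lam hlam u v hu.1 hu.2 hv.1 hv.2)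
    n hn u v' ⟨hu, huq⟩ ⟨hv', hv'p'⟩

/-- Induction on powers of resolvents: the resolvent estimate (c) of Theorem 3.6
iterates to powers of the resolvents. `RT l = (l−A_T)⁻¹`, `RS l = (l−A_S)⁻¹` and
`RS' l = (l−A_S')⁻¹` denote the resolvents (acting on `L₂(m)`). -/
theorem resolvent_power_estimate
    {Ω : Type*} [MeasurableSpace Ω] (μ : Measure Ω)
    (p q p' q' : ℝ≥0∞) [Fact (1 ≤ p)] [Fact (1 ≤ q)] [Fact (1 ≤ p')] [Fact (1 ≤ q')]
    (hp : 1 ≤ p) (hq : 1 ≤ q) (hpfin : p ≠ ∞) (hqfin : q ≠ ∞)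
    (hp' : p.HolderConjugate p') (hq' : q.HolderConjugate q')
    (RT RS RS' : ℝ → (Lp ℝ 2 μ →L[ℝ] Lp ℝ 2 μ)) (lam₀ : ℝ)
    -- positivity of the resolvents
    (hRTpos : ∀ lam ≥ lam₀, ∀ u : Lp ℝ 2 μ, 0 ≤ u → 0 ≤ RT lam u)
    (hRSpos : ∀ lam ≥ lam₀, ∀ u : Lp ℝ 2 μ, 0 ≤ u → 0 ≤ RS lam u)
    (hRS'pos : ∀ lam ≥ lam₀, ∀ v : Lp ℝ 2 μ, 0 ≤ v → 0 ≤ RS' lam v)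
    -- `T` acts on `L_q(m)`: its resolvent preserves `L₂ ∩ L_q(m)`
    (hRTq : ∀ lam ≥ lam₀, ∀ u : Lp ℝ 2 μ, MemLp (↑u) q μ → MemLp (↑(RT lam u)) q μ)
    -- `S` acts on `L_p(m)`: the dual resolvent preserves `L₂ ∩ L_{p'}(m)`
    (hRS'p' : ∀ lam ≥ lam₀, ∀ v : Lp ℝ 2 μ, MemLp (↑v) p' μ → MemLp (↑(RS' lam v)) p' μ)
    -- `RS'` is the dual of `RS`
    (hdual : ∀ lam ≥ lam₀, ∀ u v : Lp ℝ 2 μ,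
      ∫ x, (RS lam u) x * v x ∂μ = ∫ x, u x * (RS' lam v) x ∂μ)
    (f g' : Ω → ℝ) (hf : MemLp f p μ) (hf0 : 0 ≤ᵐ[μ] f)
    (hg' : MemLp g' q' μ) (hg'0 : 0 ≤ᵐ[μ] g')
    (C : ℝ) (hC : 0 ≤ C)
    -- the resolvent estimate for `n = 1`
    (hbase : ∀ lam ≥ lam₀, ∀ u v' : Lp ℝ 2 μ,
      0 ≤ u → MemLp (↑u) q μ → 0 ≤ v' → MemLp (↑v') p' μ →
      ∫ x, (RT lam u) x * v' x ∂μ ≤ (∫ x, (RS lam u) x * v' x ∂μ) +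
        C * (∫ x, (RT lam u) x * g' x ∂μ) * (∫ x, f x * (RS' lam v') x ∂μ)) :
    -- the estimate for all powers `n`
    ∀ lam ≥ lam₀, ∀ n : ℕ, 1 ≤ n → ∀ u v' : Lp ℝ 2 μ,
      0 ≤ u → MemLp (↑u) q μ → 0 ≤ v' → MemLp (↑v') p' μ →
      ∫ x, ((RT lam ^ n) u) x * v' x ∂μ ≤ (∫ x, ((RS lam ^ n) u) x * v' x ∂μ) +
        C * ∑ l ∈ Finset.Icc 1 n,
          (∫ x, ((RT lam ^ (n + 1 - l)) u) x * g' x ∂μ) *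
            (∫ x, f x * ((RS' lam ^ l) v') x ∂μ) :=
  resolvent_power_estimate_general μ q p' RT RS RS' lam₀ hRTpos hRS'pos hRTq hRS'p' hdual f g' C
    hbase
end
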